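/- Let X be a Hausdorff topological space and let Γ ⊆ Homeo(X) be a subgroup with small supports everywhere. Let f, h ∈ Homeo(X), and suppose there exists a group isomorphism φ : ⟨Γ, f⟩ → ⟨Γ, h⟩ such that φ(γ) = γ for every γ ∈ Γ and φ(f) = h. Then Supp(f) = Supp(h). -/

import Mathlib

/-!
If `f` and `h` correspond under an isomorphism fixing `Γ`, then they commute with the same
elements of `Γ`. Every `γ ∈ Γ` supported off `Supp f` commutes with `f`, hence with `h`; since
such `γ` exist inside every small open set and `X` is Hausdorff, `h` must fix every point off
`Supp f` (a moved point `y` and its image `h y` would be separated by some such `γ`). So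
`Supp h ⊆ Supp f`, and the converse holds by symmetry.
-/

open Set Topology

variable {X : Type*} [TopologicalSpace X]

/-- The group of self-homeomorphisms of `X`, with `(f * g) x = f (g x)`. -/
instance : Group (X ≃ₜ X) where
  mul f g := g.trans f
  one := Homeomorph.refl X
  inv := Homeomorph.symm
  mul_assoc _ _ _ := Homeomorph.ext fun _ => rfl
  one_mul _ := Homeomorph.ext fun _ => rfl
  mul_one _ := Homeomorph.ext fun _ => rfl
  inv_mul_cancel f := Homeomorph.ext fun x => f.symm_apply_apply x

/-- The support of a homeomorphism: the closure of the set of non-fixed points. -/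
def Supp (f : X ≃ₜ X) : Set X := closure {x | f x ≠ x}

/-- A subgroup `Γ ⊆ Homeo(X)` has small supports everywhere if every nonempty open set
contains the support of some nontrivial element of `Γ`. -/
def SmallSupportsEverywhere (Γ : Subgroup (X ≃ₜ X)) : Prop :=
  ∀ U : Set X, IsOpen U → U.Nonempty → ∃ γ ∈ Γ, γ ≠ 1 ∧ Supp γ ⊆ U

namespace Homeomorph

lemma exists_apply_ne_of_ne_one {f : X ≃ₜ X} (hf : f ≠ 1) : ∃ x, f x ≠ x := by
  by_contra! hfix
  exact hf (Homeomorph.ext hfix)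

lemma isClosed_supp (f : X ≃ₜ X) : IsClosed (Supp f) := isClosed_closure

lemma mem_supp_of_apply_ne {f : X ≃ₜ X} {x : X} (hx : f x ≠ x) : x ∈ Supp f :=
  subset_closure hx

lemma apply_eq_of_notMem_supp {f : X ≃ₜ X} {x : X} (hx : x ∉ Supp f) : f x = x :=
  not_not.mp fun hfx => hx (mem_supp_of_apply_ne hfx)

lemma apply_mem_supp_of_apply_ne {f : X ≃ₜ X} {x : X} (hx : f x ≠ x) : f x ∈ Supp f :=
  mem_supp_of_apply_ne fun e => hx (f.injective e)

lemma apply_apply_of_disjoint_supp {f g : X ≃ₜ X} (hfg : Disjoint (Supp f) (Supp g)) {x : X}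
    (hx : g x ≠ x) : f (g x) = g (f x) := by
  rw [apply_eq_of_notMem_supp (hfg.notMem_of_mem_right (apply_mem_supp_of_apply_ne hx)),
    apply_eq_of_notMem_supp (hfg.notMem_of_mem_right (mem_supp_of_apply_ne hx))]

lemma commute_of_disjoint_supp {f g : X ≃ₜ X} (hfg : Disjoint (Supp f) (Supp g)) :
    Commute f g := by
  refine Homeomorph.ext fun x => ?_
  show f (g x) = g (f x)
  by_cases hg : g x = x
  · by_cases hf : f x = x
    · rw [hg, hf, hg]
    · exact (apply_apply_of_disjoint_supp hfg.symm hf).symm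
  · exact apply_apply_of_disjoint_supp hfg hg

end Homeomorph

open Homeomorph

namespace SmallSupportsEverywhere

variable [T2Space X] {Γ : Subgroup (X ≃ₜ X)}

lemma eqOn_id_of_commute (hΓ : SmallSupportsEverywhere Γ) {h : X ≃ₜ X} {U : Set X}
    (hU : IsOpen U) (hc : ∀ γ ∈ Γ, Supp γ ⊆ U → Commute h γ) : EqOn h id U := by
  intro y hy
  by_contra hhy
  obtain ⟨W₂, W₁, hW₂, hW₁, hhyW₂, hyW₁, hW⟩ := t2_separation hhy
  -- A nontrivial `γ` supported where `h` pushes points into `W₂`, away from `Supp γ ⊆ W₁`.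
  obtain ⟨γ, hγΓ, hγ1, hγV⟩ := hΓ (U ∩ W₁ ∩ h ⁻¹' W₂)
    ((hU.inter hW₁).inter (hW₂.preimage h.continuous)) ⟨y, ⟨hy, hyW₁⟩, hhyW₂⟩
  obtain ⟨z, hz⟩ := exists_apply_ne_of_ne_one hγ1
  have hzV := hγV (mem_supp_of_apply_ne hz)
  have hγhz : γ (h z) = h z :=
    apply_eq_of_notMem_supp fun hmem => hW.symm.le_bot ⟨(hγV hmem).1.2, hzV.2⟩
  have hcomm : h (γ z) = γ (h z) := congrArg (· z) (hc γ hγΓ fun x hx => (hγV hx).1.1).eq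
  exact hz (h.injective (hcomm.trans hγhz))

lemma supp_subset_of_commute (hΓ : SmallSupportsEverywhere Γ) {f h : X ≃ₜ X}
    (hc : ∀ γ ∈ Γ, Commute f γ → Commute h γ) : Supp h ⊆ Supp f := by
  have hfix : EqOn h id (Supp f)ᶜ :=
    hΓ.eqOn_id_of_commute (isClosed_supp f).isOpen_compl fun γ hγ hγf =>
      hc γ hγ (commute_of_disjoint_supp (disjoint_compl_right.mono_right hγf))
  exact closure_minimal (fun x hx => not_not.mp fun hxf => hx (hfix hxf)) (isClosed_supp f)

end SmallSupportsEverywhere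

lemma Subgroup.commute_iff_of_mulEquiv {G : Type*} [Group G] {A B : Subgroup G} (φ : A ≃* B)
    {a b : A} {a' b' : G} (ha : (φ a : G) = a') (hb : (φ b : G) = b') :
    Commute (a : G) b ↔ Commute a' b' := by
  rw [← ha, ← hb, Submonoid.commute_coe_coe, Submonoid.commute_coe_coe,
    commute_map_iff φ.injective]

theorem supp_eq_of_iso_small_supports
    {X : Type*} [TopologicalSpace X] [T2Space X]
    (Γ : Subgroup (X ≃ₜ X)) (hΓ : SmallSupportsEverywhere Γ)
    (f h : X ≃ₜ X)
    (φ : Subgroup.closure ((Γ : Set (X ≃ₜ X)) ∪ {f}) ≃*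
         Subgroup.closure ((Γ : Set (X ≃ₜ X)) ∪ {h}))
    (hφΓ : ∀ (γ : X ≃ₜ X) (hγ : γ ∈ Γ),
      ((φ ⟨γ, Subgroup.subset_closure (Set.mem_union_left _ hγ)⟩ : _) : X ≃ₜ X) = γ)
    (hφf : ((φ ⟨f, Subgroup.subset_closure
        (Set.mem_union_right _ (Set.mem_singleton f))⟩ : _) : X ≃ₜ X) = h) :
    Supp f = Supp h := by
  have hcomm : ∀ γ ∈ Γ, Commute f γ ↔ Commute h γ := fun γ hγ =>
    Subgroup.commute_iff_of_mulEquiv φ hφf (hφΓ γ hγ)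
  exact (hΓ.supp_subset_of_commute fun γ hγ => (hcomm γ hγ).mpr).antisymm
    (hΓ.supp_subset_of_commute fun γ hγ => (hcomm γ hγ).mp)
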